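/- Let d₁, d₂ be positive integers, A a d₁×d₁ real symmetric matrix, D a d₂×d₂ real symmetric matrix, Z a d₁×d₂ real matrix, and J = [[A, Z], [−Zᵀ, D]]. Suppose the spectra of A and D are separated, i.e., either λmax(D) < λmin(A) with gap δ = λmin(A) − λmax(D), or λmax(A) < λmin(D) with gap δ = λmin(D) − λmax(A). If ‖Z‖ ≤ δ/2, then every eigenvalue of J is real. -/

import Mathlib

open Matrix

/-- Smallest eigenvalue of a Hermitian (real symmetric) matrix. -/
noncomputable def lamMin {n : Type*} [Fintype n] [DecidableEq n] {A : Matrix n n ℝ}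
    (hA : A.IsHermitian) : ℝ := ⨅ i, hA.eigenvalues i

/-- Largest eigenvalue of a Hermitian (real symmetric) matrix. -/
noncomputable def lamMax {n : Type*} [Fintype n] [DecidableEq n] {A : Matrix n n ℝ}
    (hA : A.IsHermitian) : ℝ := ⨆ i, hA.eigenvalues i

/-- The ℓ²→ℓ² operator norm of a rectangular real matrix. -/
noncomputable def l2OpNorm {m n : ℕ} (Z : Matrix (Fin m) (Fin n) ℝ) : ℝ :=
  ‖LinearMap.toContinuousLinearMap (Matrix.toEuclideanLin Z)‖

/-!
Let `μ` be an eigenvalue of `J` with eigenvector `(x, y)` and put `s = x* Z y`. Pairing the two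
block rows of `J (x, y) = μ (x, y)` with `x` and `y` gives `x* A x + s = μ |x|²` and
`y* D y - conj s = μ |y|²`. The quadratic forms are real, so if `Im μ ≠ 0` the imaginary parts
force `|x|² = |y|² = Im s / Im μ`. The real parts then give `2 Re s = y* D y - x* A x`, which
the spectral gap bounds by `δ |x|²` in absolute value, while `|s| ≤ ‖Z‖ |x| |y| ≤ δ |x|² / 2`.
Hence `Im s = 0`, a contradiction.
-/

open scoped ComplexOrder MatrixOrder
open ComplexConjugate

namespace Matrix

theorem conjTranspose_map_algebraMap {m n 𝕜 : Type*} [RCLike 𝕜] (M : Matrix m n ℝ) :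
    (M.map (algebraMap ℝ 𝕜))ᴴ = Mᵀ.map (algebraMap ℝ 𝕜) := by
  ext i j
  simp

variable {n : Type*} [Fintype n]

theorem star_dotProduct_mulVec_mono {𝕜 : Type*} [RCLike 𝕜] {M N : Matrix n n 𝕜} (h : M ≤ N)
    (x : n → 𝕜) : star x ⬝ᵥ M *ᵥ x ≤ star x ⬝ᵥ N *ᵥ x := by
  have := (le_iff.mp h).dotProduct_mulVec_nonneg x
  rwa [sub_mulVec, dotProduct_sub, sub_nonneg] at this

theorem dotProduct_self_eq_norm_toLp_sq (v : n → ℝ) : v ⬝ᵥ v = ‖WithLp.toLp 2 v‖ ^ 2 := by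
  rw [← real_inner_self_eq_norm_sq, EuclideanSpace.inner_toLp_toLp, star_trivial]

theorem norm_star_dotProduct_sq_le (x w : n → ℂ) :
    ‖star x ⬝ᵥ w‖ ^ 2 ≤ (star x ⬝ᵥ x).re * (star w ⬝ᵥ w).re := by
  have h := inner_mul_inner_self_le (𝕜 := ℂ) (WithLp.toLp 2 x) (WithLp.toLp 2 w)
  simp only [EuclideanSpace.inner_toLp_toLp] at h
  have e : ‖x ⬝ᵥ star w‖ = ‖star x ⬝ᵥ w‖ := by rw [dotProduct_star, norm_star, dotProduct_comm]
  rwa [dotProduct_comm w, e, ← sq, dotProduct_comm x, dotProduct_comm w] at h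

variable [DecidableEq n]

theorem dotProduct_algebraMap_mulVec {R α : Type*} [CommSemiring R] [CommSemiring α]
    [Algebra R α] (c : R) (x y : n → α) :
    x ⬝ᵥ algebraMap R (Matrix n n α) c *ᵥ y = c • (x ⬝ᵥ y) := by
  rw [Algebra.algebraMap_eq_smul_one, smul_mulVec, one_mulVec, dotProduct_smul]

theorem PosSemidef.map_algebraMap {𝕜 : Type*} [RCLike 𝕜] {M : Matrix n n ℝ}
    (hM : M.PosSemidef) : (M.map (algebraMap ℝ 𝕜)).PosSemidef := by
  obtain ⟨B, rfl⟩ := CStarAlgebra.nonneg_iff_eq_star_mul_self.mp hM.nonneg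
  rw [star_eq_conjTranspose, Matrix.map_mul, conjTranspose_eq_transpose_of_trivial,
    ← conjTranspose_map_algebraMap]
  exact posSemidef_conjTranspose_mul_self _

theorem map_algebraMap_mono {𝕜 : Type*} [RCLike 𝕜] {M N : Matrix n n ℝ} (h : M ≤ N) :
    M.map (algebraMap ℝ 𝕜) ≤ N.map (algebraMap ℝ 𝕜) := by
  rw [le_iff, ← Matrix.map_sub _ (map_sub _)]
  exact (le_iff.mp h).map_algebraMap

theorem star_dotProduct_map_mulVec_le {M : Matrix n n ℝ} {c : ℝ}
    (h : M ≤ algebraMap ℝ (Matrix n n ℝ) c) (x : n → ℂ) :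
    star x ⬝ᵥ M.map (algebraMap ℝ ℂ) *ᵥ x ≤ c * (star x ⬝ᵥ x) := by
  have h' := map_algebraMap_mono (𝕜 := ℂ) h
  rw [map_algebraMap c (algebraMap ℝ ℂ) (map_zero _) rfl] at h'
  simpa only [dotProduct_algebraMap_mulVec, Complex.real_smul] using
    star_dotProduct_mulVec_mono h' x

theorem mul_le_star_dotProduct_map_mulVec {M : Matrix n n ℝ} {c : ℝ}
    (h : algebraMap ℝ (Matrix n n ℝ) c ≤ M) (x : n → ℂ) :
    c * (star x ⬝ᵥ x) ≤ star x ⬝ᵥ M.map (algebraMap ℝ ℂ) *ᵥ x := by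
  have h' := map_algebraMap_mono (𝕜 := ℂ) h
  rw [map_algebraMap c (algebraMap ℝ ℂ) (map_zero _) rfl] at h'
  simpa only [dotProduct_algebraMap_mulVec, Complex.real_smul] using
    star_dotProduct_mulVec_mono h' x

theorem IsHermitian.algebraMap_lamMin_le {A : Matrix n n ℝ} (hA : A.IsHermitian) :
    algebraMap ℝ (Matrix n n ℝ) (lamMin hA) ≤ A := by
  rw [algebraMap_le_iff_le_spectrum hA.isSelfAdjoint, hA.spectrum_real_eq_range_eigenvalues]
  rintro _ ⟨i, rfl⟩
  exact ciInf_le (Finite.bddBelow_range _) i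

theorem IsHermitian.le_algebraMap_lamMax {A : Matrix n n ℝ} (hA : A.IsHermitian) :
    A ≤ algebraMap ℝ (Matrix n n ℝ) (lamMax hA) := by
  rw [le_algebraMap_iff_spectrum_le hA.isSelfAdjoint, hA.spectrum_real_eq_range_eigenvalues]
  rintro _ ⟨i, rfl⟩
  exact le_ciSup (Finite.bddAbove_range _) i

theorem exists_mulVec_eq_smul_of_mem_spectrum {K : Type*} [Field K] {M : Matrix n n K} {μ : K}
    (h : μ ∈ spectrum K M) : ∃ v ≠ 0, M *ᵥ v = μ • v := by
  rw [← spectrum_toLin', ← Module.End.hasEigenvalue_iff_mem_spectrum] at h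
  obtain ⟨v, hv, hv0⟩ := h.exists_hasEigenvector
  exact ⟨v, hv0, Module.End.mem_eigenspace_iff.mp hv⟩

end Matrix

theorem transpose_mul_self_le_of_l2OpNorm_le {d₁ d₂ : ℕ} {Z : Matrix (Fin d₁) (Fin d₂) ℝ}
    {c : ℝ} (hZ : l2OpNorm Z ≤ c) : Zᵀ * Z ≤ algebraMap ℝ _ (c ^ 2) := by
  have hZZ : (Zᵀ * Z).IsHermitian :=
    conjTranspose_eq_transpose_of_trivial Z ▸ isHermitian_conjTranspose_mul_self Z
  refine le_iff.mpr <| .of_dotProduct_mulVec_nonneg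
    ((IsSelfAdjoint.algebraMap _ (.all _)).sub hZZ) fun y => ?_
  have hZy : ‖WithLp.toLp 2 (Z *ᵥ y)‖ ≤ c * ‖WithLp.toLp 2 y‖ := by
    have h := (LinearMap.toContinuousLinearMap (toEuclideanLin Z)).le_opNorm (WithLp.toLp 2 y)
    rw [LinearMap.coe_toContinuousLinearMap', toLpLin_toLp, toLin'_apply] at h
    exact h.trans (by gcongr; exact hZ)
  rw [star_trivial, sub_mulVec, dotProduct_sub, dotProduct_algebraMap_mulVec, ← mulVec_mulVec,
    dotProduct_mulVec, vecMul_transpose, dotProduct_self_eq_norm_toLp_sq,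
    dotProduct_self_eq_norm_toLp_sq, smul_eq_mul, sub_nonneg]
  nlinarith [norm_nonneg (WithLp.toLp 2 (Z *ᵥ y))]

theorem norm_star_dotProduct_map_mulVec_sq_le {d₁ d₂ : ℕ} {Z : Matrix (Fin d₁) (Fin d₂) ℝ}
    {c : ℝ} (hZ : l2OpNorm Z ≤ c) (x : Fin d₁ → ℂ) (y : Fin d₂ → ℂ) :
    ‖star x ⬝ᵥ Z.map (algebraMap ℝ ℂ) *ᵥ y‖ ^ 2 ≤
      c ^ 2 * ((star x ⬝ᵥ x).re * (star y ⬝ᵥ y).re) := by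
  set w := Z.map (algebraMap ℝ ℂ) *ᵥ y
  have hw : star w ⬝ᵥ w = star y ⬝ᵥ (Zᵀ * Z).map (algebraMap ℝ ℂ) *ᵥ y := by
    rw [star_mulVec, ← dotProduct_mulVec, mulVec_mulVec, Matrix.map_mul,
      conjTranspose_map_algebraMap]
  have hw_le := (Complex.le_def.mp
    (hw ▸ star_dotProduct_map_mulVec_le (transpose_mul_self_le_of_l2OpNorm_le hZ) y)).1
  rw [Complex.re_ofReal_mul] at hw_le
  calc ‖star x ⬝ᵥ w‖ ^ 2 ≤ (star x ⬝ᵥ x).re * (star w ⬝ᵥ w).re := norm_star_dotProduct_sq_le x w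
    _ ≤ (star x ⬝ᵥ x).re * (c ^ 2 * (star y ⬝ᵥ y).re) := by
      gcongr
      exact (Complex.le_def.mp (dotProduct_star_self_nonneg x)).1
    _ = _ := by ring

theorem star_dotProduct_eq_of_fromBlocks_mulVec_eq_smul {m n : Type*} [Fintype m] [Fintype n]
    {A : Matrix m m ℂ} {D : Matrix n n ℂ} {Z : Matrix m n ℂ} {μ : ℂ} {x : m → ℂ} {y : n → ℂ}
    (h : fromBlocks A Z (-Zᴴ) D *ᵥ Sum.elim x y = μ • Sum.elim x y) :
    star x ⬝ᵥ A *ᵥ x + star x ⬝ᵥ Z *ᵥ y = μ * (star x ⬝ᵥ x) ∧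
      star y ⬝ᵥ D *ᵥ y - conj (star x ⬝ᵥ Z *ᵥ y) = μ * (star y ⬝ᵥ y) := by
  rw [fromBlocks_mulVec, Sum.elim_comp_inl, Sum.elim_comp_inr] at h
  have hx : A *ᵥ x + Z *ᵥ y = μ • x := funext fun i => by simpa using congr_fun h (.inl i)
  have hy : -Zᴴ *ᵥ x + D *ᵥ y = μ • y := funext fun j => by simpa using congr_fun h (.inr j)
  constructor
  · rw [← dotProduct_add, hx, dotProduct_smul, smul_eq_mul]
  · have hconj : conj (star x ⬝ᵥ Z *ᵥ y) = star y ⬝ᵥ Zᴴ *ᵥ x := by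
      rw [starRingEnd_apply, star_dotProduct, star_star, star_mulVec, dotProduct_mulVec]
    rw [hconj, ← smul_eq_mul, ← dotProduct_smul, ← hy, dotProduct_add, neg_mulVec, dotProduct_neg]
    ring

/-- Read `a = x* A x`, `d = y* D y`, `s = x* Z y`, `p = |x|²`, `q = |y|²` for an eigenvector
`(x, y)` of `J` with eigenvalue `μ`, and `α, β` for the bounds separating the spectra. -/
theorem im_eq_zero_of_separated {a d s μ p q : ℂ} {α β : ℝ} (hβα : β ≤ α)
    (hp : 0 ≤ p) (hq : 0 ≤ q) (hpq : p + q ≠ 0) (ha : α * p ≤ a) (hd : d ≤ β * q)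
    (hs : ‖s‖ ^ 2 ≤ ((α - β) / 2) ^ 2 * (p.re * q.re))
    (h₁ : a + s = μ * p) (h₂ : d - conj s = μ * q) : μ.im = 0 := by
  obtain ⟨p, hp_nonneg, rfl⟩ := RCLike.nonneg_iff_exists_ofReal.mp hp
  obtain ⟨q, -, rfl⟩ := RCLike.nonneg_iff_exists_ofReal.mp hq
  rw [Complex.le_def] at ha hd
  simp only [Complex.ext_iff] at h₁ h₂
  simp only [RCLike.ofReal_eq_complex_ofReal, Complex.mul_re, Complex.mul_im, Complex.ofReal_re,
    Complex.ofReal_im, Complex.sub_re, Complex.sub_im, Complex.add_re, Complex.add_im,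
    Complex.conj_re, Complex.conj_im, mul_zero, sub_zero, add_zero, zero_mul] at ha hd h₁ h₂ hs
  by_contra hμ
  obtain rfl : p = q := mul_left_cancel₀ hμ (by linarith)
  have hp_pos : 0 < p := hp_nonneg.lt_of_ne (by rintro rfl; simp at hpq)
  have hre : (α - β) * p ≤ -(2 * s.re) := by nlinarith
  have hre_sq : ((α - β) * p) ^ 2 ≤ (2 * s.re) ^ 2 := by
    rw [← neg_sq (2 * s.re)]
    exact pow_le_pow_left₀ (mul_nonneg (sub_nonneg.mpr hβα) hp_nonneg) hre 2
  have him : s.im = μ.im * p := by linarith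
  rw [Complex.sq_norm, Complex.normSq_apply] at hs
  have hs_im : s.im = 0 := by nlinarith
  exact hμ (by simpa [hp_pos.ne'] using him.symm.trans hs_im)

theorem stmt2_general {d₁ d₂ : ℕ}
    (A : Matrix (Fin d₁) (Fin d₁) ℝ) (D : Matrix (Fin d₂) (Fin d₂) ℝ)
    (Z : Matrix (Fin d₁) (Fin d₂) ℝ)
    (hA : A.IsHermitian) (hD : D.IsHermitian)
    (δ : ℝ)
    (hsep : (lamMax hD < lamMin hA ∧ δ = lamMin hA - lamMax hD) ∨
            (lamMax hA < lamMin hD ∧ δ = lamMin hD - lamMax hA))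
    (hZ : l2OpNorm Z ≤ δ / 2) :
    ∀ μ ∈ spectrum ℂ ((Matrix.fromBlocks A Z (-Zᵀ) D).map (algebraMap ℝ ℂ)), μ.im = 0 := by
  intro μ hμ
  obtain ⟨v, hv0, hv⟩ := exists_mulVec_eq_smul_of_mem_spectrum hμ
  obtain ⟨x, y, rfl⟩ : ∃ x y, v = Sum.elim x y := ⟨_, _, (Sum.elim_comp_inl_inr v).symm⟩
  rw [fromBlocks_map, Matrix.map_neg _ (map_neg _), ← conjTranspose_map_algebraMap] at hv
  obtain ⟨h₁, h₂⟩ := star_dotProduct_eq_of_fromBlocks_mulVec_eq_smul hv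
  have hpq : star x ⬝ᵥ x + star y ⬝ᵥ y ≠ 0 := by
    simpa [dotProduct, Fintype.sum_sum_type] using dotProduct_star_self_eq_zero.not.mpr hv0
  have hs := norm_star_dotProduct_map_mulVec_sq_le hZ x y
  rcases hsep with ⟨hlt, rfl⟩ | ⟨hlt, rfl⟩
  · exact im_eq_zero_of_separated hlt.le (dotProduct_star_self_nonneg x)
      (dotProduct_star_self_nonneg y) hpq
      (mul_le_star_dotProduct_map_mulVec hA.algebraMap_lamMin_le x)
      (star_dotProduct_map_mulVec_le hD.le_algebraMap_lamMax y) hs h₁ h₂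
  -- the roles of the two blocks are swapped, with `s` replaced by `-conj s`
  · refine im_eq_zero_of_separated hlt.le (dotProduct_star_self_nonneg y)
      (dotProduct_star_self_nonneg x) (by rwa [add_comm])
      (mul_le_star_dotProduct_map_mulVec hD.algebraMap_lamMin_le y)
      (star_dotProduct_map_mulVec_le hA.le_algebraMap_lamMax x) ?_ (by rwa [← sub_eq_add_neg]) ?_
    · rwa [norm_neg, Complex.norm_conj, mul_comm (star y ⬝ᵥ y).re]
    · rwa [map_neg, Complex.conj_conj, sub_neg_eq_add]

theorem stmt2 {d₁ d₂ : ℕ} (hd₁ : 0 < d₁) (hd₂ : 0 < d₂)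
    (A : Matrix (Fin d₁) (Fin d₁) ℝ) (D : Matrix (Fin d₂) (Fin d₂) ℝ)
    (Z : Matrix (Fin d₁) (Fin d₂) ℝ)
    (hA : A.IsHermitian) (hD : D.IsHermitian)
    (δ : ℝ)
    (hsep : (lamMax hD < lamMin hA ∧ δ = lamMin hA - lamMax hD) ∨
            (lamMax hA < lamMin hD ∧ δ = lamMin hD - lamMax hA))
    (hZ : l2OpNorm Z ≤ δ / 2) :
    ∀ μ ∈ spectrum ℂ ((Matrix.fromBlocks A Z (-Zᵀ) D).map (algebraMap ℝ ℂ)), μ.im = 0 :=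
  stmt2_general A D Z hA hD δ hsep hZ
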